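/- Let (A, X, I) be a formal context with X finite, and let m₁, m₂ be mass functions on X with m₁ ≤_↑ m₂. Then for every G ⊆ A, ρ_{m₁}(G) ≤ ρ_{m₂}(G). -/

import Mathlib

/-- `Y`-restricted upward derivation operator of a formal context `(A, X, I)`:
`B↑_Y = {x ∈ Y | ∀ a ∈ B, (a,x) ∈ I}`. -/
def fcaUp {A X : Type*} (I : Set (A × X)) (Y : Set X) (B : Set A) : Set X :=
  {x ∈ Y | ∀ a ∈ B, (a, x) ∈ I}

/-- Downward derivation operator: `Z↓ = {a ∈ A | ∀ x ∈ Z, (a,x) ∈ I}`. -/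
def fcaDown {A X : Type*} (I : Set (A × X)) (Z : Set X) : Set A :=
  {a | ∀ x ∈ Z, (a, x) ∈ I}

/-- `B ⊆ A` is Galois-stable with respect to `Y ⊆ X` if `(B↑_Y)↓ = B`. -/
def GaloisStable {A X : Type*} (I : Set (A × X)) (Y : Set X) (B : Set A) : Prop :=
  fcaDown I (fcaUp I Y B) = B

/-- A (Dempster–Shafer) mass function on a finite set `X`: a nonnegative real-valued
function on subsets of `X` summing to `1`. -/
def IsMassFunction {X : Type*} [Fintype X] (m : Finset X → ℝ) : Prop :=
  (∀ Y, 0 ≤ m Y) ∧ (∑ Y : Finset X, m Y = 1)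

open scoped Classical in
/-- The stability index of `G ⊆ A`:
`ρ_m(G) = Σ { m(Y) : Y ⊆ X such that G is Galois-stable w.r.t. Y }`. -/
noncomputable def stabilityIndex {A X : Type*} [Fintype X] (I : Set (A × X))
    (m : Finset X → ℝ) (G : Set A) : ℝ :=
  ∑ Y : Finset X, if GaloisStable I (↑Y : Set X) G then m Y else 0

/-- The β-categorization `ℙ(m, β) = { (G↑_X)↓ : G ⊆ A with ρ_m(G) ≥ β }`. -/
noncomputable def betaCategorization {A X : Type*} [Fintype X] (I : Set (A × X))
    (m : Finset X → ℝ) (β : ℝ) : Set (Set A) :=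
  {B | ∃ G : Set A, β ≤ stabilityIndex I m G ∧ fcaDown I (fcaUp I Set.univ G) = B}

/-- The up-set restricted order: `m₁ ≤_↑ m₂` iff for every upward closed family `𝒱`
of subsets of `X`, `Σ_{Y ∈ 𝒱} m₁(Y) ≤ Σ_{Y ∈ 𝒱} m₂(Y)`. -/
def upLE {X : Type*} [Fintype X] (m₁ m₂ : Finset X → ℝ) : Prop :=
  ∀ V : Finset (Finset X), (∀ Y ∈ V, ∀ Z : Finset X, Y ⊆ Z → Z ∈ V) →
    (∑ Y ∈ V, m₁ Y) ≤ ∑ Y ∈ V, m₂ Y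

/-! The sets `Y` with respect to which `G` is Galois-stable form an up-set of `Finset X`,
and `ρ_m(G)` is the `m`-mass of that up-set, so `m₁ ≤_↑ m₂` applies to it directly. -/

section FormalContext

variable {A X : Type*} (I : Set (A × X))

theorem fcaUp_mono_left {Y Z : Set X} (hYZ : Y ⊆ Z) (B : Set A) :
    fcaUp I Y B ⊆ fcaUp I Z B :=
  fun _ hx => ⟨hYZ hx.1, hx.2⟩

theorem fcaDown_anti {Z W : Set X} (hZW : Z ⊆ W) : fcaDown I W ⊆ fcaDown I Z :=
  fun _ ha x hx => ha x (hZW hx)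

theorem subset_fcaDown_fcaUp (Y : Set X) (B : Set A) : B ⊆ fcaDown I (fcaUp I Y B) :=
  fun a ha _ hx => hx.2 a ha

variable {I}

theorem GaloisStable.mono {Y Z : Set X} {B : Set A} (hYZ : Y ⊆ Z) (hY : GaloisStable I Y B) :
    GaloisStable I Z B := by
  refine (subset_fcaDown_fcaUp I Z B).antisymm' ?_
  calc fcaDown I (fcaUp I Z B) ⊆ fcaDown I (fcaUp I Y B) := fcaDown_anti I (fcaUp_mono_left I hYZ B)
    _ = B := hY

end FormalContext

theorem upLE.sum_ite_le {X : Type*} [Fintype X] {m₁ m₂ : Finset X → ℝ} (h : upLE m₁ m₂)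
    (P : Finset X → Prop) [DecidablePred P] (hP : Monotone P) :
    ∑ Y, (if P Y then m₁ Y else 0) ≤ ∑ Y, if P Y then m₂ Y else 0 := by
  simp only [← Finset.sum_filter]
  refine h _ fun Y hY Z hYZ => ?_
  simp only [Finset.mem_filter, Finset.mem_univ, true_and] at hY ⊢
  exact hP hYZ hY

theorem stabilityIndex_mono_general {A X : Type*} [Fintype X] (I : Set (A × X))
    (m₁ m₂ : Finset X → ℝ) (h : upLE m₁ m₂) (G : Set A) :
    stabilityIndex I m₁ G ≤ stabilityIndex I m₂ G := by
  classical
  exact h.sum_ite_le _ fun _ _ hYZ => GaloisStable.mono (Finset.coe_subset.mpr hYZ)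

/-- if `m₁ ≤_↑ m₂`, then `ρ_{m₁}(G) ≤ ρ_{m₂}(G)` for every `G ⊆ A`. -/
theorem stabilityIndex_mono {A X : Type*} [Fintype X] (I : Set (A × X))
    (m₁ m₂ : Finset X → ℝ) (h₁ : IsMassFunction m₁) (h₂ : IsMassFunction m₂)
    (h : upLE m₁ m₂) (G : Set A) :
    stabilityIndex I m₁ G ≤ stabilityIndex I m₂ G :=
  stabilityIndex_mono_general I m₁ m₂ h G
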